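/- arXiv:2004.09723 — 5 statements merged into one kernel-verified Lean document; each statement's English description precedes it below -/
import Mathlib

section
/- Let P and f be future-directed timelike vectors in V and let J be an antisymmetric angular momentum tensor. Then η(f,P) ≠ 0, and the SSC worldline with respect to f is the straight line through the point with lowered components Σ_ρ J_{μρ}f^ρ/η(f,P) in direction P; that is, {x ∈ V : ∀μ, Σ_ν S[x]_{μν}f^ν = 0} = {x ∈ V : ∃λ ∈ ℝ, ∀μ, x_μ = Σ_ρ J_{μρ}f^ρ/η(f,P) + λP_μ}. -/
noncomputable section

open Finset

abbrev V4 := Fin 4 → ℝ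

/-- Sign of the Minkowski metric diag(-1,1,1,1) on the diagonal. -/
def sgn4 (μ : Fin 4) : ℝ := if μ = 0 then -1 else 1

/-- Index lowering with η = diag(-1,1,1,1): `lo v μ = v_μ`. -/
def lo (v : V4) : V4 := fun μ => sgn4 μ * v μ

/-- Minkowski bilinear form of signature (-,+,+,+). -/
def mink (v w : V4) : ℝ := ∑ μ, lo v μ * w μ

/-- Future-directed timelike vector. -/
def FDTimelike (v : V4) : Prop := mink v v < 0 ∧ 0 < v 0

/-- Future-directed unit timelike vector. -/
def FDUnit (u : V4) : Prop := mink u u = -1 ∧ 0 < u 0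

/-- κ = √(−η(P,P)). -/
def kappa (P : V4) : ℝ := Real.sqrt (-(mink P P))

/-- Spin tensor at the point x: S[x]_{μν} = J_{μν} − x_μ P_ν + x_ν P_μ. -/
def spinT (J : Fin 4 → Fin 4 → ℝ) (P x : V4) (μ ν : Fin 4) : ℝ :=
  J μ ν - lo x μ * lo P ν + lo x ν * lo P μ

/-- SSC worldline with respect to f: points where S[x]_{μν} f^ν = 0. -/
def SSCline (J : Fin 4 → Fin 4 → ℝ) (P f : V4) : Set V4 :=
  {x | ∀ μ, ∑ ν, spinT J P x μ ν * f ν = 0}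

@[simp] lemma sgn4_0 : sgn4 0 = -1 := rfl
@[simp] lemma sgn4_1 : sgn4 1 = 1 := rfl
@[simp] lemma sgn4_2 : sgn4 2 = 1 := rfl
@[simp] lemma sgn4_3 : sgn4 3 = 1 := rfl

lemma mink_symm (v w : V4) : mink v w = mink w v := by
  simp [mink, lo, Fin.sum_univ_four]; ring

lemma key (J : Fin 4 → Fin 4 → ℝ) (P f x : V4) (μ : Fin 4) :
    ∑ ν, spinT J P x μ ν * f ν =
      (∑ ρ, J μ ρ * f ρ) - lo x μ * mink f P + mink x f * lo P μ := by
  simp only [spinT, mink, lo, Fin.sum_univ_four, sgn4_0, sgn4_1, sgn4_2, sgn4_3]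
  ring

lemma antisum (J : Fin 4 → Fin 4 → ℝ) (f : V4) (hJ : ∀ μ ν, J μ ν = - J ν μ) :
    ∑ μ, (∑ ρ, J μ ρ * f ρ) * f μ = 0 := by
  simp only [Fin.sum_univ_four]
  linear_combination f 0 * f 1 * hJ 0 1 + f 0 * f 2 * hJ 0 2 + f 0 * f 3 * hJ 0 3 +
    f 1 * f 2 * hJ 1 2 + f 1 * f 3 * hJ 1 3 + f 2 * f 3 * hJ 2 3 +
    (f 0 ^ 2 / 2) * hJ 0 0 + (f 1 ^ 2 / 2) * hJ 1 1 + (f 2 ^ 2 / 2) * hJ 2 2 +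
    (f 3 ^ 2 / 2) * hJ 3 3

lemma mink_neg (P f : V4) (hP : FDTimelike P) (hf : FDTimelike f) : mink f P < 0 := by
  obtain ⟨hP1, hP0⟩ := hP
  obtain ⟨hf1, hf0⟩ := hf
  simp only [mink, lo, Fin.sum_univ_four, sgn4_0, sgn4_1, sgn4_2, sgn4_3] at *
  have hCS : (f 1 * P 1 + f 2 * P 2 + f 3 * P 3) ^ 2 ≤
      (f 1 ^ 2 + f 2 ^ 2 + f 3 ^ 2) * (P 1 ^ 2 + P 2 ^ 2 + P 3 ^ 2) := by
    nlinarith [sq_nonneg (f 1 * P 2 - f 2 * P 1), sq_nonneg (f 1 * P 3 - f 3 * P 1),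
      sq_nonneg (f 2 * P 3 - f 3 * P 2)]
  rcases lt_or_ge (f 1 * P 1 + f 2 * P 2 + f 3 * P 3) (f 0 * P 0) with hlt | hge
  · linarith
  · exfalso
    have h0 : 0 < f 0 * P 0 := mul_pos hf0 hP0
    nlinarith [hCS, hge, h0, sq_nonneg (f 1), sq_nonneg (f 2), sq_nonneg (f 3),
      sq_nonneg (P 1), sq_nonneg (P 2), sq_nonneg (P 3), mul_pos hf0 hf0, mul_pos hP0 hP0]

theorem statement0 (P f : V4) (J : Fin 4 → Fin 4 → ℝ)
    (hP : FDTimelike P) (hf : FDTimelike f)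
    (hJ : ∀ μ ν, J μ ν = - J ν μ) :
    mink f P ≠ 0 ∧
    SSCline J P f =
      {x : V4 | ∃ t : ℝ, ∀ μ, lo x μ = (∑ ρ, J μ ρ * f ρ) / mink f P + t * lo P μ} := by
  have hc : mink f P < 0 := mink_neg P f hP hf
  have hc' : mink f P ≠ 0 := ne_of_lt hc
  refine ⟨hc', ?_⟩
  ext x
  simp only [SSCline, Set.mem_setOf_eq]
  constructor
  · intro h
    refine ⟨mink x f / mink f P, fun μ => ?_⟩
    have hk : (∑ ρ, J μ ρ * f ρ) - lo x μ * mink f P + mink x f * lo P μ = 0 := by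
      rw [← key]; exact h μ
    field_simp
    linear_combination -hk
  · rintro ⟨t, h⟩ μ
    have hPf : (∑ ν, lo P ν * f ν) = mink f P := by
      rw [show (∑ ν, lo P ν * f ν) = mink P f from rfl, mink_symm]
    have hxf : mink x f = t * mink f P := by
      calc mink x f = ∑ ν, lo x ν * f ν := rfl
        _ = ∑ ν, ((∑ ρ, J ν ρ * f ρ) * f ν / mink f P + t * (lo P ν * f ν)) := by
              refine Finset.sum_congr rfl fun ν _ => ?_
              rw [h ν]; ring
        _ = (∑ ν, (∑ ρ, J ν ρ * f ρ) * f ν) / mink f P + t * ∑ ν, lo P ν * f ν := by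
              rw [Finset.sum_add_distrib, ← Finset.sum_div, ← Finset.mul_sum]
        _ = t * mink f P := by rw [antisum J f hJ, hPf]; simp
    rw [key, h μ, hxf]
    field_simp
    ring
end
end

section
/- Let P and f be future-directed timelike vectors in V, J an antisymmetric angular momentum tensor, Λ : V → V a linear map with η(Λv,Λw) = η(v,w) for all v,w, and a ∈ V. Define P' := ΛP and the antisymmetric tensor J' by J'(v,w) := J(Λ⁻¹v, Λ⁻¹w) + η(a,v)η(ΛP,w) − η(a,w)η(ΛP,v), where J is viewed as the bilinear form J(v,w) = Σ_{μ,ν} v^μ J_{μν} w^ν. Then for every x ∈ V: x lies on the SSC worldline of (P,J) with respect to f if and only if Λx + a lies on the SSC worldline of (P',J') with respect to Λf. Consequently the SSC worldline of the Poincaré-transformed data (P',J') with respect to Λf is the image of the SSC worldline of (P,J) with respect to f under the map x ↦ Λx + a. -/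
noncomputable section

open Finset

/-- J viewed as a bilinear form: J(v,w) = v^μ J_{μν} w^ν. -/
def minkBil (J : Fin 4 → Fin 4 → ℝ) (v w : V4) : ℝ := ∑ μ, ∑ ν, v μ * J μ ν * w ν

lemma mink_single (v : V4) (μ : Fin 4) : mink v (Pi.single μ 1) = lo v μ := by
  simp [mink, Pi.single_apply]

lemma mink_add_left (u v w : V4) : mink (u + v) w = mink u w + mink v w := by
  simp [mink, lo, Pi.add_apply, mul_add, add_mul, Finset.sum_add_distrib]

lemma pi_expand (v : V4) : v = ∑ μ, v μ • (Pi.single μ 1 : V4) := by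
  funext α
  simp [Finset.sum_apply, Pi.single_apply]

lemma apply_eq_sum (g : V4 →ₗ[ℝ] V4) (v : V4) :
    g v = ∑ μ, v μ • g (Pi.single μ 1) := by
  conv_lhs => rw [pi_expand v]
  simp [map_sum]

lemma minkBil_sum_left (J : Fin 4 → Fin 4 → ℝ) (c : Fin 4 → ℝ) (u : Fin 4 → V4) (w : V4) :
    minkBil J (∑ i, c i • u i) w = ∑ i, c i * minkBil J (u i) w := by
  simp only [minkBil, Finset.sum_apply, Pi.smul_apply, smul_eq_mul, Fin.sum_univ_four]
  ring

lemma minkBil_sum_right (J : Fin 4 → Fin 4 → ℝ) (c : Fin 4 → ℝ) (u : Fin 4 → V4) (w : V4) :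
    minkBil J w (∑ i, c i • u i) = ∑ i, c i * minkBil J w (u i) := by
  simp only [minkBil, Finset.sum_apply, Pi.smul_apply, smul_eq_mul, Fin.sum_univ_four]
  ring

/-- Expansion of the SSC contraction against a test vector. -/
lemma spin_contract (J : Fin 4 → Fin 4 → ℝ) (P x f w : V4) :
    (∑ μ, ∑ ν, w μ * spinT J P x μ ν * f ν) =
      minkBil J w f - mink x w * mink P f + mink x f * mink P w := by
  simp [spinT, mink, minkBil, lo, sgn4, Fin.sum_univ_four]
  ring

lemma cond_iff (S : Fin 4 → Fin 4 → ℝ) (f : V4) :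
    (∀ μ, ∑ ν, S μ ν * f ν = 0) ↔ ∀ w : V4, ∑ μ, ∑ ν, w μ * S μ ν * f ν = 0 := by
  constructor
  · intro h w
    calc (∑ μ, ∑ ν, w μ * S μ ν * f ν) = ∑ μ, w μ * ∑ ν, S μ ν * f ν := by
          refine Finset.sum_congr rfl fun μ _ => ?_
          rw [Finset.mul_sum]
          exact Finset.sum_congr rfl fun ν _ => by ring
      _ = 0 := by simp [h]
  · intro h μ
    have := h (Pi.single μ 1)
    simpa [Pi.single_apply, Finset.sum_ite_eq] using this

theorem statement2' (P f a : V4) (J J' : Fin 4 → Fin 4 → ℝ)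
    (Λ : V4 →ₗ[ℝ] V4)
    (hΛ : ∀ v w : V4, mink (Λ v) (Λ w) = mink v w)
    (hJ' : ∀ μ ν, J' μ ν =
      minkBil J (Function.invFun Λ (Pi.single μ 1)) (Function.invFun Λ (Pi.single ν 1))
      + mink a (Pi.single μ 1) * mink (Λ P) (Pi.single ν 1)
      - mink a (Pi.single ν 1) * mink (Λ P) (Pi.single μ 1)) :
    (∀ x : V4, x ∈ SSCline J P f ↔ Λ x + a ∈ SSCline J' (Λ P) (Λ f)) ∧
    SSCline J' (Λ P) (Λ f) = (fun x : V4 => Λ x + a) '' SSCline J P f := by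
  classical
  have hinj : Function.Injective Λ := by
    rw [← LinearMap.ker_eq_bot, LinearMap.ker_eq_bot']
    intro v hv
    funext μ
    have h1 : mink v (Pi.single μ 1) = 0 := by
      rw [← hΛ v (Pi.single μ 1), hv]
      simp [mink, lo]
    rw [mink_single] at h1
    simp only [lo] at h1
    rcases mul_eq_zero.mp h1 with h1 | h1
    · exact absurd h1 (by unfold sgn4; split <;> norm_num)
    · exact h1
  have hsurj : Function.Surjective Λ := LinearMap.injective_iff_surjective.mp hinj
  set E : V4 ≃ₗ[ℝ] V4 := LinearEquiv.ofBijective Λ ⟨hinj, hsurj⟩ with hE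
  set g : V4 →ₗ[ℝ] V4 := E.symm.toLinearMap with hg
  have hΛE : ∀ v, Λ (E.symm v) = v := fun v => E.apply_symm_apply v
  have hgΛ : ∀ v, g (Λ v) = v := fun v => E.symm_apply_apply v
  have hEinv : ∀ v, Function.invFun Λ v = E.symm v := by
    intro v
    apply hinj
    rw [Function.invFun_eq (hsurj v)]
    exact (hΛE v).symm
  have hJ'bil : ∀ v w : V4, minkBil J' v w
      = minkBil J (g v) (g w) + mink a v * mink (Λ P) w - mink a w * mink (Λ P) v := by
    intro v w
    have e1 : minkBil J (g v) (g w)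
        = ∑ μ, v μ * ∑ ν, w ν * minkBil J (g (Pi.single μ 1)) (g (Pi.single ν 1)) := by
      rw [apply_eq_sum g v, minkBil_sum_left]
      refine Finset.sum_congr rfl fun μ _ => ?_
      rw [apply_eq_sum g w, minkBil_sum_right]
    rw [e1]
    show (∑ μ, ∑ ν, v μ * J' μ ν * w ν) = _
    simp only [hJ', hEinv, mink_single, LinearEquiv.coe_coe, hg]
    simp only [mink, Fin.sum_univ_four]
    ring
  have trans : ∀ x w : V4,
      (∑ μ, ∑ ν, (Λ w) μ * spinT J' (Λ P) (Λ x + a) μ ν * (Λ f) ν)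
        = ∑ μ, ∑ ν, w μ * spinT J P x μ ν * f ν := by
    intro x w
    rw [spin_contract, spin_contract, hJ'bil (Λ w) (Λ f), hgΛ, hgΛ,
      mink_add_left, mink_add_left, hΛ, hΛ, hΛ, hΛ]
    ring
  have key : ∀ x : V4, x ∈ SSCline J P f ↔ Λ x + a ∈ SSCline J' (Λ P) (Λ f) := by
    intro x
    show (∀ μ, _) ↔ (∀ μ, _)
    rw [cond_iff, cond_iff]
    constructor
    · intro h w'
      obtain ⟨w, rfl⟩ := hsurj w'
      rw [trans x w]
      exact h w
    · intro h w
      have := h (Λ w)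
      rwa [trans x w] at this
  refine ⟨key, ?_⟩
  ext y
  constructor
  · intro hy
    refine ⟨E.symm (y - a), ?_, ?_⟩
    · rw [key]
      have hy' : Λ (E.symm (y - a)) + a = y := by rw [hΛE]; abel
      rwa [hy']
    · show Λ (E.symm (y - a)) + a = y
      rw [hΛE]; abel
  · rintro ⟨x, hx, rfl⟩
    exact (key x).mp hx


theorem statement2 (P f a : V4) (J J' : Fin 4 → Fin 4 → ℝ)
    (Λ : V4 →ₗ[ℝ] V4)
    (hΛ : ∀ v w : V4, mink (Λ v) (Λ w) = mink v w)
    (hP : FDTimelike P) (hf : FDTimelike f)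
    (hJ : ∀ μ ν, J μ ν = - J ν μ)
    (hJ' : ∀ μ ν, J' μ ν =
      minkBil J (Function.invFun Λ (Pi.single μ 1)) (Function.invFun Λ (Pi.single ν 1))
      + mink a (Pi.single μ 1) * mink (Λ P) (Pi.single ν 1)
      - mink a (Pi.single ν 1) * mink (Λ P) (Pi.single μ 1)) :
    (∀ x : V4, x ∈ SSCline J P f ↔ Λ x + a ∈ SSCline J' (Λ P) (Λ f)) ∧
    SSCline J' (Λ P) (Λ f) = (fun x : V4 => Λ x + a) '' SSCline J P f := by
  exact statement2' P f a J J' Λ hΛ hJ'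
end
end

section
/- Let P be future-directed timelike with κ := √(−η(P,P)), u a future-directed unit timelike vector, J antisymmetric, and let x^NW ∈ V satisfy the Newton–Wigner SSC Σ_ν S[x^NW]_{μν}(u^ν + P^ν/κ) = 0 for all μ. Then for any x ∈ V the following are equivalent: (a) the covector α with components α_ρ := Σ_σ (u^σ + P^σ/κ)S[x]_{σρ} is a scalar multiple of the covector with components u_ρ − P_ρ/κ (the reformulated centre-of-spin condition); (b) x − x^NW lies in the linear span of u and P. -/
noncomputable section

open Finset

/-!
Put `f = u + P/κ` and `δ = x - x^NW`. Moving the base point from `x^NW` to `x` adds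
`P_σ δ_ρ - δ_σ P_ρ` to the spin tensor, and the Newton–Wigner condition with antisymmetry kills
the contraction of `f` with `S[x^NW]`, so `α = (η(P,f) δ - η(δ,f) P)♭`. The linear map
`δ ↦ η(P,f) δ - η(δ,f) P` has kernel `ℝ P`, because `η(P,f) = η(u,P) - κ < 0`, and sends `u` to
`η(P,f) (u - P/κ)`, because `η(u,f) = η(P,f)/κ`. Since `♭` is injective, `α` is a multiple of
`(u - P/κ)♭` exactly when `δ ∈ span {u, P}`.
-/

theorem exists_smul_eq_iff_mem_span_pair {K E : Type*} [Field K] [AddCommGroup E] [Module K E]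
    (φ : E →ₗ[K] K) {u P : E} {r : K} (hP : φ P ≠ 0) (hu : φ u = r * φ P) (δ : E) :
    (∃ c : K, φ P • δ - φ δ • P = c • (u - r • P)) ↔ δ ∈ Submodule.span K {u, P} := by
  rw [Submodule.mem_span_pair]
  constructor
  · rintro ⟨c, hc⟩
    refine ⟨c / φ P, (φ δ - c * r) / φ P, smul_right_injective E hP ?_⟩
    have hδ : φ P • δ = c • (u - r • P) + φ δ • P := by rw [← hc]; abel
    simp only [hδ, smul_add, smul_smul, mul_div_cancel₀ _ hP]
    module
  · rintro ⟨s, t, rfl⟩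
    refine ⟨φ P * s, ?_⟩
    simp only [map_add, map_smul, smul_eq_mul, hu]
    module

lemma lo_injective : Function.Injective lo := by
  intro v w h
  funext μ
  have hμ : sgn4 μ ≠ 0 := by unfold sgn4; split_ifs <;> norm_num
  exact mul_left_cancel₀ hμ (congrFun h μ)

def minkLeft (f : V4) : V4 →ₗ[ℝ] ℝ where
  toFun v := mink v f
  map_add' v w := by
    simp only [mink, lo, Pi.add_apply, ← Finset.sum_add_distrib]
    exact Finset.sum_congr rfl fun _ _ => by ring
  map_smul' c v := by
    simp only [mink, lo, Pi.smul_apply, smul_eq_mul, RingHom.id_apply, Finset.mul_sum]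
    exact Finset.sum_congr rfl fun _ _ => by ring

lemma mink_add_div (v u P : V4) (k : ℝ) :
    mink v (fun ν => u ν + P ν / k) = mink v u + mink v P / k := by
  simp only [mink, Finset.sum_div, ← Finset.sum_add_distrib]
  exact Finset.sum_congr rfl fun μ _ => by ring

lemma FDUnit.fdTimelike {u : V4} (hu : FDUnit u) : FDTimelike u :=
  ⟨by linarith [hu.1], hu.2⟩

lemma FDTimelike.mink_neg {v w : V4} (hv : FDTimelike v) (hw : FDTimelike w) :
    mink v w < 0 := by
  obtain ⟨hvv, hv0⟩ := hv
  obtain ⟨hww, hw0⟩ := hw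
  simp only [mink, lo, sgn4, Fin.sum_univ_four, Fin.isValue, reduceIte,
    show (1 : Fin 4) ≠ 0 by decide, show (2 : Fin 4) ≠ 0 by decide,
    show (3 : Fin 4) ≠ 0 by decide, if_false] at *
  have hCS : (v 1 * w 1 + v 2 * w 2 + v 3 * w 3) ^ 2
      ≤ (v 1 ^ 2 + v 2 ^ 2 + v 3 ^ 2) * (w 1 ^ 2 + w 2 ^ 2 + w 3 ^ 2) := by
    nlinarith [sq_nonneg (v 1 * w 2 - v 2 * w 1), sq_nonneg (v 1 * w 3 - v 3 * w 1),
      sq_nonneg (v 2 * w 3 - v 3 * w 2)]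
  by_contra! h
  have hvw : (v 0 * w 0) ^ 2 ≤ (v 1 * w 1 + v 2 * w 2 + v 3 * w 3) ^ 2 := by
    nlinarith [mul_pos hv0 hw0]
  nlinarith [mul_lt_mul'' (show v 1 ^ 2 + v 2 ^ 2 + v 3 ^ 2 < v 0 ^ 2 by nlinarith)
    (show w 1 ^ 2 + w 2 ^ 2 + w 3 ^ 2 < w 0 ^ 2 by nlinarith) (by positivity) (by positivity)]

lemma kappa_pos {P : V4} (hP : mink P P < 0) : 0 < kappa P :=
  Real.sqrt_pos.2 (neg_pos.2 hP)

lemma kappa_sq {P : V4} (hP : mink P P ≤ 0) : kappa P ^ 2 = -mink P P :=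
  Real.sq_sqrt (neg_nonneg.2 hP)

section SpinTensor

variable {J : Fin 4 → Fin 4 → ℝ}

lemma spinT_antisymm (hJ : ∀ μ ν, J μ ν = - J ν μ) (P x : V4) (μ ν : Fin 4) :
    spinT J P x μ ν = - spinT J P x ν μ := by
  simp only [spinT, hJ μ ν]; ring

lemma spinT_eq_add (P x y : V4) (σ ρ : Fin 4) :
    spinT J P x σ ρ = spinT J P y σ ρ + lo P σ * lo (x - y) ρ - lo (x - y) σ * lo P ρ := by
  simp only [spinT, lo, Pi.sub_apply]; ring

lemma sum_mul_spinT_eq_zero_of_mem_SSCline (hJ : ∀ μ ν, J μ ν = - J ν μ)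
    {P f y : V4} (hy : y ∈ SSCline J P f) (ρ : Fin 4) :
    ∑ σ, f σ * spinT J P y σ ρ = 0 :=
  calc ∑ σ, f σ * spinT J P y σ ρ = -∑ σ, spinT J P y ρ σ * f σ := by
        rw [← Finset.sum_neg_distrib]
        exact Finset.sum_congr rfl fun σ _ => by rw [spinT_antisymm hJ P y σ ρ]; ring
    _ = 0 := by rw [hy ρ, neg_zero]

lemma sum_mul_spinT_eq_lo (hJ : ∀ μ ν, J μ ν = - J ν μ)
    {P f y : V4} (hy : y ∈ SSCline J P f) (x : V4) (ρ : Fin 4) :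
    ∑ σ, f σ * spinT J P x σ ρ = lo (mink P f • (x - y) - mink (x - y) f • P) ρ := by
  simp only [spinT_eq_add P x y, mul_add, mul_sub, Finset.sum_add_distrib,
    Finset.sum_sub_distrib, sum_mul_spinT_eq_zero_of_mem_SSCline hJ hy, mink]
  simp only [lo, Pi.sub_apply, Pi.smul_apply, smul_eq_mul, zero_add, Finset.sum_mul, mul_sub,
    Finset.mul_sum, ← Finset.sum_sub_distrib]
  exact Finset.sum_congr rfl fun _ _ => by ring

end SpinTensor

theorem statement5 (P u xNW x : V4) (J : Fin 4 → Fin 4 → ℝ)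
    (hP : FDTimelike P) (hu : FDUnit u) (hJ : ∀ μ ν, J μ ν = - J ν μ)
    (hNW : ∀ μ, ∑ ν, spinT J P xNW μ ν * (u ν + P ν / kappa P) = 0) :
    (∃ c : ℝ, ∀ ρ, (∑ σ, (u σ + P σ / kappa P) * spinT J P x σ ρ)
        = c * (lo u ρ - lo P ρ / kappa P))
    ↔ x - xNW ∈ Submodule.span ℝ ({u, P} : Set V4) := by
  set f : V4 := fun ν => u ν + P ν / kappa P with hf
  have hκ : kappa P ≠ 0 := (kappa_pos hP.1).ne'
  have hPf : mink P f = mink u P - kappa P := by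
    rw [hf, mink_add_div, mink_symm, ← neg_neg (mink P P), ← kappa_sq hP.1.le]
    field_simp
    ring
  have huf : mink u f = (kappa P)⁻¹ * mink P f := by
    rw [hf, mink_add_div, hu.1, hPf]
    field_simp
    ring
  have hPf_ne : mink P f ≠ 0 := by
    linarith [hu.fdTimelike.mink_neg hP, kappa_pos hP.1]
  have hα : (fun ρ => ∑ σ, f σ * spinT J P x σ ρ) =
      lo (minkLeft f P • (x - xNW) - minkLeft f (x - xNW) • P) :=
    funext (sum_mul_spinT_eq_lo hJ hNW x)
  have hcov (c : ℝ) :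
      (∀ ρ, ∑ σ, f σ * spinT J P x σ ρ = c * (lo u ρ - lo P ρ / kappa P)) ↔
        minkLeft f P • (x - xNW) - minkLeft f (x - xNW) • P = c • (u - (kappa P)⁻¹ • P) := by
    have hrhs (ρ : Fin 4) :
        c * (lo u ρ - lo P ρ / kappa P) = lo (c • (u - (kappa P)⁻¹ • P)) ρ := by
      simp only [lo, Pi.smul_apply, Pi.sub_apply, smul_eq_mul]; ring
    simp only [hrhs, ← funext_iff, hα, lo_injective.eq_iff]
  exact (exists_congr hcov).trans (exists_smul_eq_iff_mem_span_pair (minkLeft f) hPf_ne huf _)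
end
end

section
/- (Classical Newton–Wigner theorem, spin-zero case.) Let X : ℝ³ × ℝ³ → ℝ³ be a C¹ function whose components satisfy (i) {X^a, X^b} = 0 for all a,b; (ii) {X^a, P_b} = δ_ab for all a,b; (iii) {J_ab, X^c} = δ_ac X^b − δ_bc X^a for all a,b,c; (iv) X(x,−p) = X(x,p) for all (x,p) (time-reversal invariance). Then X(x,p) = x for all (x,p) ∈ ℝ³ × ℝ³. Conversely, the projection (x,p) ↦ x satisfies (i)–(iv). -/
noncomputable section

open Finset

abbrev R3 := Fin 3 → ℝ

/-- The spin-zero phase space Γ₀ = ℝ³ × ℝ³ with points (x, p). -/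
abbrev Phase0 := R3 × R3

/-- Euclidean dot product on ℝ³. -/
def dot3 (v w : R3) : ℝ := ∑ a, v a * w a

/-- Gradient of f with respect to x. -/
def dX0 (f : Phase0 → ℝ) (γ : Phase0) : R3 := fun a => fderiv ℝ f γ (Pi.single a 1, 0)

/-- Gradient of f with respect to p. -/
def dP0 (f : Phase0 → ℝ) (γ : Phase0) : R3 := fun a => fderiv ℝ f γ (0, Pi.single a 1)

/-- Poisson bracket {f,g} = ∇ₓf·∇ₚg − ∇ₚf·∇ₓg on Γ₀. -/
def pb0 (f g : Phase0 → ℝ) (γ : Phase0) : ℝ :=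
  dot3 (dX0 f γ) (dP0 g γ) - dot3 (dP0 f γ) (dX0 g γ)

/-- Kronecker delta. -/
def kdelta (a b : Fin 3) : ℝ := if a = b then 1 else 0

/-- Generator of spatial translations: P_a(x,p) = p_a. -/
def Pgen0 (a : Fin 3) : Phase0 → ℝ := fun γ => γ.2 a

/-- Generator of rotations: J_ab(x,p) = x_a p_b − x_b p_a. -/
def Jgen0 (a b : Fin 3) : Phase0 → ℝ := fun γ => γ.1 a * γ.2 b - γ.1 b * γ.2 a

/-!
Brackets with `P_b` are `x`-derivatives, so (ii) says that `X (·, p)` has derivative the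
identity, whence `X (x, p) = x + f p` with `f := X (0, ·)`. At `x = 0`, (iii) says that the
derivative of `f` along the infinitesimal rotation `p ↦ n ⨯₃ p` is `n ⨯₃ f p`; by uniqueness of
solutions of `y' = n ⨯₃ y`, `f` commutes with every rotation about `n`. If `n` is a unit vector
orthogonal to `p`, the rotation by `π` about `n` sends `p` to `-p`, so (iv) forces `f p` to be
fixed by that rotation, i.e. parallel to `n`. Two orthonormal such `n` give `f p = 0`.
-/

open Matrix Module

lemma kdelta_eq_single (a b : Fin 3) : kdelta a b = (Pi.single a 1 : R3) b := by
  simp [kdelta, Pi.single_apply, eq_comm]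

lemma fderiv_apply_eq_dotProduct (g : Phase0 → ℝ) (γ : Phase0) (v w : R3) :
    fderiv ℝ g γ (v, w) = v ⬝ᵥ dX0 g γ + w ⬝ᵥ dP0 g γ := by
  have hvw : ((v, w) : Phase0) = ∑ k, (v k • (Pi.single k 1, 0) + w k • (0, Pi.single k 1)) := by
    ext j <;> simp [Prod.fst_sum, Prod.snd_sum, Finset.sum_apply, Pi.single_apply]
  unfold dX0 dP0
  rw [hvw, map_sum]
  simp only [map_add, map_smul, smul_eq_mul, Finset.sum_add_distrib, dotProduct]

lemma pb0_eq_fderiv (f g : Phase0 → ℝ) (γ : Phase0) :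
    pb0 f g γ = fderiv ℝ g γ (-dP0 f γ, dX0 f γ) := by
  rw [fderiv_apply_eq_dotProduct, neg_dotProduct]
  exact sub_eq_neg_add _ _

def rotGen (a b : Fin 3) (v : R3) : R3 := v b • Pi.single a 1 - v a • Pi.single b 1

lemma rotGen_apply (a b c : Fin 3) (v : R3) :
    rotGen a b v c = kdelta a c * v b - kdelta b c * v a := by
  simp [rotGen, kdelta_eq_single, mul_comm]

lemma rotGen_zero (a b : Fin 3) : rotGen a b 0 = 0 := by simp [rotGen]

lemma cross_eq_rotGen (n v : R3) :
    n ⨯₃ v = n 0 • rotGen 2 1 v + n 1 • rotGen 0 2 v + n 2 • rotGen 1 0 v := by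
  ext i
  fin_cases i <;> simp [cross_apply, rotGen_apply, kdelta] <;> ring

def xCoord (a : Fin 3) : Phase0 →L[ℝ] ℝ :=
  (ContinuousLinearMap.proj a).comp (ContinuousLinearMap.fst ℝ R3 R3)

def pCoord (a : Fin 3) : Phase0 →L[ℝ] ℝ :=
  (ContinuousLinearMap.proj a).comp (ContinuousLinearMap.snd ℝ R3 R3)

lemma fderiv_fst_apply (a : Fin 3) (γ v : Phase0) :
    fderiv ℝ (fun γ : Phase0 => γ.1 a) γ v = v.1 a :=
  congrArg (· v) (xCoord a).fderiv

lemma fderiv_Pgen0_apply (a : Fin 3) (γ v : Phase0) : fderiv ℝ (Pgen0 a) γ v = v.2 a :=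
  congrArg (· v) (pCoord a).fderiv

lemma dX0_fst (a : Fin 3) (γ : Phase0) : dX0 (fun γ : Phase0 => γ.1 a) γ = Pi.single a 1 := by
  ext k
  simp [dX0, fderiv_fst_apply, Pi.single_apply, eq_comm]

lemma dP0_fst (a : Fin 3) (γ : Phase0) : dP0 (fun γ : Phase0 => γ.1 a) γ = 0 := by
  ext k
  simp [dP0, fderiv_fst_apply]

lemma hasFDerivAt_Jgen0 (a b : Fin 3) (γ : Phase0) :
    HasFDerivAt (Jgen0 a b)
      (γ.1 a • pCoord b + γ.2 b • xCoord a - (γ.1 b • pCoord a + γ.2 a • xCoord b)) γ :=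
  ((xCoord a).hasFDerivAt.mul (pCoord b).hasFDerivAt).sub
    ((xCoord b).hasFDerivAt.mul (pCoord a).hasFDerivAt)

lemma dX0_Jgen0 (a b : Fin 3) (γ : Phase0) : dX0 (Jgen0 a b) γ = rotGen a b γ.2 := by
  ext k
  simp [dX0, (hasFDerivAt_Jgen0 a b γ).fderiv, xCoord, pCoord, rotGen_apply, kdelta_eq_single,
    Pi.single_apply, eq_comm]

lemma dP0_Jgen0 (a b : Fin 3) (γ : Phase0) : dP0 (Jgen0 a b) γ = -rotGen a b γ.1 := by
  ext k
  simp [dP0, (hasFDerivAt_Jgen0 a b γ).fderiv, xCoord, pCoord, rotGen_apply, kdelta_eq_single,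
    Pi.single_apply, eq_comm]

lemma pb0_Jgen0 (a b : Fin 3) (g : Phase0 → ℝ) (γ : Phase0) :
    pb0 (Jgen0 a b) g γ = fderiv ℝ g γ (rotGen a b γ.1, rotGen a b γ.2) := by
  rw [pb0_eq_fderiv, dP0_Jgen0, dX0_Jgen0, neg_neg]

lemma pb0_fst_fst (a b : Fin 3) (γ : Phase0) :
    pb0 (fun γ : Phase0 => γ.1 a) (fun γ => γ.1 b) γ = 0 := by
  rw [pb0_eq_fderiv, fderiv_fst_apply, dP0_fst, neg_zero]
  rfl

lemma pb0_fst_Pgen0 (a b : Fin 3) (γ : Phase0) :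
    pb0 (fun γ : Phase0 => γ.1 a) (Pgen0 b) γ = kdelta a b := by
  rw [pb0_eq_fderiv, fderiv_Pgen0_apply, dX0_fst, kdelta_eq_single]

lemma pb0_Jgen0_fst (a b c : Fin 3) (γ : Phase0) :
    pb0 (Jgen0 a b) (fun γ : Phase0 => γ.1 c) γ = kdelta a c * γ.1 b - kdelta b c * γ.1 a := by
  rw [pb0_Jgen0, fderiv_fst_apply, ← rotGen_apply]

section PositionFunction

variable {X : Phase0 → R3}

lemma fderiv_component_apply {γ : Phase0} (hX : DifferentiableAt ℝ X γ) (c : Fin 3)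
    (v : Phase0) :
    fderiv ℝ (fun γ => X γ c) γ v = fderiv ℝ X γ v c :=
  congrArg (· v) (hasFDerivAt_pi'.1 hX.hasFDerivAt c).fderiv

lemma dX0_eq_single_of_pb0_Pgen0
    (h2 : ∀ a b : Fin 3, ∀ γ, pb0 (fun γ => X γ a) (Pgen0 b) γ = kdelta a b)
    (a : Fin 3) (γ : Phase0) : dX0 (fun γ => X γ a) γ = Pi.single a 1 := by
  ext b
  rw [← kdelta_eq_single, ← h2 a b γ, pb0_eq_fderiv, fderiv_Pgen0_apply]

lemma eq_add_of_pb0_Pgen0 (hX : Differentiable ℝ X)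
    (h2 : ∀ a b : Fin 3, ∀ γ, pb0 (fun γ => X γ a) (Pgen0 b) γ = kdelta a b) (x p : R3) :
    X (x, p) = x + X (0, p) := by
  have hslice (y : R3) : HasFDerivAt (fun y => X (y, p)) (ContinuousLinearMap.id ℝ R3) y := by
    have hL : (fderiv ℝ X (y, p)).comp (ContinuousLinearMap.inl ℝ R3 R3) =
        ContinuousLinearMap.id ℝ R3 := by
      refine ContinuousLinearMap.ext fun v => funext fun c => ?_
      rw [ContinuousLinearMap.comp_apply, ContinuousLinearMap.inl_apply,
        ← fderiv_component_apply (hX _), fderiv_apply_eq_dotProduct,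
        dX0_eq_single_of_pb0_Pgen0 h2, dotProduct_single, zero_dotProduct]
      simp
    exact hL ▸ (hX (y, p)).hasFDerivAt.comp y (hasFDerivAt_prodMk_left y p)
  have hshift (y : R3) : HasFDerivAt (fun y => y + X (0, p)) (ContinuousLinearMap.id ℝ R3) y :=
    (hasFDerivAt_id y).add_const _
  have := eq_of_fderiv_eq (fun y => (hslice y).differentiableAt)
    (fun y => (hshift y).differentiableAt) (fun y => (hslice y).fderiv.trans (hshift y).fderiv.symm)
    0 (zero_add _).symm
  exact congrFun this x

lemma fderiv_rotGen_of_pb0_Jgen0 (hX : Differentiable ℝ X)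
    (h3 : ∀ a b c : Fin 3, ∀ γ, pb0 (Jgen0 a b) (fun γ => X γ c) γ
      = kdelta a c * X γ b - kdelta b c * X γ a) (a b : Fin 3) (p : R3) :
    fderiv ℝ (fun q => X (0, q)) p (rotGen a b p) = rotGen a b (X (0, p)) := by
  ext c
  have h := h3 a b c (0, p)
  rw [pb0_Jgen0, rotGen_zero, fderiv_component_apply (hX _), ← rotGen_apply] at h
  have hslice : HasFDerivAt (fun q => X (0, q))
      ((fderiv ℝ X (0, p)).comp (ContinuousLinearMap.inr ℝ R3 R3)) p :=
    (hX (0, p)).hasFDerivAt.comp p (hasFDerivAt_prodMk_right 0 p)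
  rw [hslice.fderiv]
  exact h

lemma fderiv_cross_of_pb0_Jgen0 (hX : Differentiable ℝ X)
    (h3 : ∀ a b c : Fin 3, ∀ γ, pb0 (Jgen0 a b) (fun γ => X γ c) γ
      = kdelta a c * X γ b - kdelta b c * X γ a) (n p : R3) :
    fderiv ℝ (fun q => X (0, q)) p (n ⨯₃ p) = n ⨯₃ X (0, p) := by
  simp only [cross_eq_rotGen n, map_add, map_smul, fderiv_rotGen_of_pb0_Jgen0 hX h3]

end PositionFunction

section Rotations

variable {n : R3}

-- Rodrigues' formula for the rotation by the angle `θ` about the unit axis `n`.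
def rotAbout (n : R3) (θ : ℝ) (v : R3) : R3 :=
  Real.cos θ • v + Real.sin θ • n ⨯₃ v + ((1 - Real.cos θ) * (n ⬝ᵥ v)) • n

lemma rotAbout_zero (n v : R3) : rotAbout n 0 v = v := by simp [rotAbout]

lemma rotAbout_pi (n v : R3) : rotAbout n Real.pi v = (2 * (n ⬝ᵥ v)) • n - v := by
  simp only [rotAbout, Real.cos_pi, Real.sin_pi]
  module

lemma hasDerivAt_rotAbout (hn : n ⬝ᵥ n = 1) (v : R3) (θ : ℝ) :
    HasDerivAt (fun θ => rotAbout n θ v) (n ⨯₃ rotAbout n θ v) θ := by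
  have h : HasDerivAt (fun θ => rotAbout n θ v)
      (-Real.sin θ • v + Real.cos θ • n ⨯₃ v + ((0 - -Real.sin θ) * (n ⬝ᵥ v)) • n) θ :=
    (((Real.hasDerivAt_cos θ).smul_const v).add ((Real.hasDerivAt_sin θ).smul_const
      (n ⨯₃ v))).add ((((hasDerivAt_const θ 1).sub (Real.hasDerivAt_cos θ)).mul_const
      (n ⬝ᵥ v)).smul_const n)
  refine h.congr_deriv ?_
  simp only [rotAbout, map_add, map_smul, cross_self, cross_cross_eq_smul_sub_smul', hn]
  module

lemma apply_rotAbout {f : R3 → R3} (hf : Differentiable ℝ f) (hn : n ⬝ᵥ n = 1)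
    (hequiv : ∀ q, fderiv ℝ f q (n ⨯₃ q) = n ⨯₃ f q) (θ : ℝ) (p : R3) :
    f (rotAbout n θ p) = rotAbout n θ (f p) := by
  -- both sides solve `y' = n ⨯₃ y` with `y 0 = f p`
  have hlip : LipschitzWith _ (LinearMap.toContinuousLinearMap (crossProduct n)) :=
    ContinuousLinearMap.lipschitz _
  have horbit (t : ℝ) : HasDerivAt (fun θ => f (rotAbout n θ p)) (n ⨯₃ f (rotAbout n t p)) t := by
    rw [← hequiv]
    exact (hf _).hasFDerivAt.comp_hasDerivAt t (hasDerivAt_rotAbout hn p t)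
  have hsol := ODE_solution_unique_univ (v := fun _ => crossProduct n) (s := fun _ => Set.univ)
    (t₀ := 0) (fun _ => hlip.lipschitzOnWith) (fun t => ⟨horbit t, trivial⟩)
    (fun t => ⟨hasDerivAt_rotAbout hn (f p) t, trivial⟩) (by simp only [rotAbout_zero])
  exact congrFun hsol θ

end Rotations

lemma exists_orthonormal_pair_orthogonal (p : R3) :
    ∃ u v : R3, u ⬝ᵥ u = 1 ∧ v ⬝ᵥ v = 1 ∧ u ⬝ᵥ v = 0 ∧ u ⬝ᵥ p = 0 ∧ v ⬝ᵥ p = 0 := by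
  let E := EuclideanSpace ℝ (Fin 3)
  have hK : 2 ≤ finrank ℝ (ℝ ∙ WithLp.toLp 2 p : Submodule ℝ E)ᗮ := by
    have h := (ℝ ∙ WithLp.toLp 2 p : Submodule ℝ E).finrank_add_finrank_orthogonal
    have h1 := finrank_span_le_card (R := ℝ) ({WithLp.toLp 2 p} : Set E)
    have hE : finrank ℝ E = 3 := finrank_euclideanSpace_fin
    simp only [Set.toFinset_singleton, Finset.card_singleton] at h h1
    omega
  let b := stdOrthonormalBasis ℝ (ℝ ∙ WithLp.toLp 2 p : Submodule ℝ E)ᗮ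
  have hdot (x y : E) : x.ofLp ⬝ᵥ y.ofLp = inner ℝ x y := by
    rw [EuclideanSpace.inner_eq_star_dotProduct, star_trivial, dotProduct_comm]
  have hmem (i) : (b i : E).ofLp ⬝ᵥ p = 0 := by
    have := (b i).2
    rwa [Submodule.mem_orthogonal_singleton_iff_inner_left, ← hdot] at this
  have hon (i j) : (b i : E).ofLp ⬝ᵥ (b j : E).ofLp = if i = j then 1 else 0 := by
    rw [hdot, ← Submodule.coe_inner, b.inner_eq_ite]
  exact ⟨(b ⟨0, by omega⟩ : E).ofLp, (b ⟨1, by omega⟩ : E).ofLp,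
    by simp [hon], by simp [hon], by simp [hon], hmem _, hmem _⟩

lemma eq_zero_of_even_of_fderiv_cross {f : R3 → R3} (hf : Differentiable ℝ f)
    (heven : ∀ p, f (-p) = f p) (hequiv : ∀ n q, fderiv ℝ f q (n ⨯₃ q) = n ⨯₃ f q) (p : R3) :
    f p = 0 := by
  have hparallel (n : R3) (hn : n ⬝ᵥ n = 1) (hnp : n ⬝ᵥ p = 0) : f p = (n ⬝ᵥ f p) • n := by
    -- the rotation by `π` about `n` reverses `p`
    have h := apply_rotAbout hf hn (hequiv n) Real.pi p
    rw [rotAbout_pi, rotAbout_pi, hnp, mul_zero, zero_smul, zero_sub, heven] at h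
    have h2 : (2 : ℝ) • (f p - (n ⬝ᵥ f p) • n) = 0 := by
      linear_combination (norm := module) h
    rw [smul_eq_zero, sub_eq_zero] at h2
    exact h2.resolve_left two_ne_zero
  obtain ⟨u, v, hu, hv, huv, hup, hvp⟩ := exists_orthonormal_pair_orthogonal p
  have hufp : u ⬝ᵥ f p = 0 := by
    rw [hparallel v hv hvp, dotProduct_smul, huv, smul_zero]
  rw [hparallel u hu hup, hufp, zero_smul]

theorem statement8_general (X : Phase0 → R3) (hX : ContDiff ℝ 1 X)
    (h2 : ∀ a b : Fin 3, ∀ γ, pb0 (fun γ => X γ a) (Pgen0 b) γ = kdelta a b)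
    (h3 : ∀ a b c : Fin 3, ∀ γ, pb0 (Jgen0 a b) (fun γ => X γ c) γ
      = kdelta a c * X γ b - kdelta b c * X γ a)
    (h4 : ∀ x p : R3, X (x, -p) = X (x, p)) :
    (∀ x p : R3, X (x, p) = x) ∧
    (ContDiff ℝ 1 (fun γ : Phase0 => γ.1) ∧
     (∀ a b : Fin 3, ∀ γ, pb0 (fun γ : Phase0 => γ.1 a) (fun γ => γ.1 b) γ = 0) ∧
     (∀ a b : Fin 3, ∀ γ, pb0 (fun γ : Phase0 => γ.1 a) (Pgen0 b) γ = kdelta a b) ∧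
     (∀ a b c : Fin 3, ∀ γ, pb0 (Jgen0 a b) (fun γ : Phase0 => γ.1 c) γ
        = kdelta a c * γ.1 b - kdelta b c * γ.1 a) ∧
     (∀ x p : R3, ((x, -p) : Phase0).1 = ((x, p) : Phase0).1)) := by
  refine ⟨fun x p => ?_, contDiff_fst, pb0_fst_fst, pb0_fst_Pgen0, pb0_Jgen0_fst, fun _ _ => rfl⟩
  have hXd : Differentiable ℝ X := hX.differentiable one_ne_zero
  have hp : X (0, p) = 0 :=
    eq_zero_of_even_of_fderiv_cross (f := fun q => X (0, q))
      (hXd.comp ((differentiable_const 0).prodMk differentiable_id)) (h4 0)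
      (fderiv_cross_of_pb0_Jgen0 hXd h3) p
  rw [eq_add_of_pb0_Pgen0 hXd h2, hp, add_zero]

theorem statement8 (X : Phase0 → R3) (hX : ContDiff ℝ 1 X)
    (h1 : ∀ a b : Fin 3, ∀ γ, pb0 (fun γ => X γ a) (fun γ => X γ b) γ = 0)
    (h2 : ∀ a b : Fin 3, ∀ γ, pb0 (fun γ => X γ a) (Pgen0 b) γ = kdelta a b)
    (h3 : ∀ a b c : Fin 3, ∀ γ, pb0 (Jgen0 a b) (fun γ => X γ c) γ
      = kdelta a c * X γ b - kdelta b c * X γ a)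
    (h4 : ∀ x p : R3, X (x, -p) = X (x, p)) :
    (∀ x p : R3, X (x, p) = x) ∧
    (ContDiff ℝ 1 (fun γ : Phase0 => γ.1) ∧
     (∀ a b : Fin 3, ∀ γ, pb0 (fun γ : Phase0 => γ.1 a) (fun γ => γ.1 b) γ = 0) ∧
     (∀ a b : Fin 3, ∀ γ, pb0 (fun γ : Phase0 => γ.1 a) (Pgen0 b) γ = kdelta a b) ∧
     (∀ a b c : Fin 3, ∀ γ, pb0 (Jgen0 a b) (fun γ : Phase0 => γ.1 c) γ
        = kdelta a c * γ.1 b - kdelta b c * γ.1 a) ∧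
     (∀ x p : R3, ((x, -p) : Phase0).1 = ((x, p) : Phase0).1)) :=
  statement8_general X hX h2 h3 h4
end
end

section
/- (The Poincaré algebra is perfect.) Let η₄ be the 4×4 real diagonal matrix diag(−1,1,1,1), and let 𝔭 be the set of 5×5 real matrices M (indices in Fin 5 = {0,1,2,3,4}) such that M 4 j = 0 for all j (the last row vanishes) and the upper-left 4×4 block ω of M satisfies ωᵀη₄ + η₄ω = 0 (the block is skew-adjoint with respect to the Minkowski form). Then 𝔭 is closed under the matrix commutator ⁅A,B⁆ = AB − BA (it is a Lie subalgebra of the 5×5 matrices), and 𝔭 is perfect: every element of 𝔭 is a finite linear combination of commutators ⁅A,B⁆ with A,B ∈ 𝔭, i.e. the derived subalgebra ⁅𝔭,𝔭⁆ equals 𝔭. -/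
noncomputable section

open Finset Matrix

/-- Minkowski form η₄ = diag(−1,1,1,1). -/
def eta4m : Matrix (Fin 4) (Fin 4) ℝ := Matrix.diagonal ![-1, 1, 1, 1]

/-- The upper-left 4×4 block of a 5×5 matrix. -/
def lorBlock (M : Matrix (Fin 5) (Fin 5) ℝ) : Matrix (Fin 4) (Fin 4) ℝ :=
  Matrix.of fun i j : Fin 4 => M i.castSucc j.castSucc

/-- The matrix realization of the Poincaré algebra: 5×5 matrices with vanishing last
row whose upper-left 4×4 block is skew-adjoint with respect to η₄. -/
def poincAlg : Set (Matrix (Fin 5) (Fin 5) ℝ) :=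
  {M | (∀ j, M 4 j = 0) ∧ (lorBlock M)ᵀ * eta4m + eta4m * lorBlock M = 0}

/-!
The algebra is the semidirect product `so(η) ⋉ ℝⁿ`: writing `M = [[ω, v], [0, 0]]`, the
commutator of two such matrices is `[[⁅ω, ω'⁆, ω v' - ω' v], [0, 0]]`. For a diagonal sign
matrix `η = diag s`, the matrices `L a b = s a E_ab - s b E_ba` span `so(η)`, and for distinct
`a, b, c` they satisfy `⁅L a c, L c b⁆ = s c • L a b`, so `so(η)` is perfect once `n ≥ 3`.
The translations are commutators too, since `L a b e_b = s a e_a`.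
-/

section Commutators

variable {K A : Type*} [Semiring K] [Ring A] [Module K A]

variable (K) in
def commutatorSpan (X : Set A) : Submodule K A :=
  Submodule.span K {C | ∃ a ∈ X, ∃ b ∈ X, C = a * b - b * a}

lemma commutator_mem_commutatorSpan {X : Set A} {a b : A} (ha : a ∈ X) (hb : b ∈ X) :
    a * b - b * a ∈ commutatorSpan K X :=
  Submodule.subset_span ⟨a, ha, b, hb, rfl⟩

end Commutators

namespace Matrix

section Affine

variable {R : Type*} [CommRing R] {n : ℕ}

lemma isSkewAdjoint_iff_add_eq_zero {m : Type*} [Fintype m] (J A : Matrix m m R) :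
    J.IsSkewAdjoint A ↔ Aᵀ * J + J * A = 0 := by
  rw [Matrix.IsSkewAdjoint, Matrix.IsAdjointPair, mul_neg, ← add_eq_zero_iff_eq_neg]

def affineMatrix :
    (Matrix (Fin n) (Fin n) R × (Fin n → R)) →ₗ[R] Matrix (Fin (n + 1)) (Fin (n + 1)) R where
  toFun x := of fun i j => Fin.lastCases 0 (fun i => Fin.lastCases (x.2 i) (fun j => x.1 i j) j) i
  map_add' x y := by
    ext i j
    induction i using Fin.lastCases <;> induction j using Fin.lastCases <;> simp
  map_smul' c x := by
    ext i j
    induction i using Fin.lastCases <;> induction j using Fin.lastCases <;> simp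

@[simp]
lemma affineMatrix_last (x : Matrix (Fin n) (Fin n) R × (Fin n → R)) (j : Fin (n + 1)) :
    affineMatrix x (Fin.last n) j = 0 := by
  simp [affineMatrix]

@[simp]
lemma affineMatrix_castSucc_last (x : Matrix (Fin n) (Fin n) R × (Fin n → R)) (i : Fin n) :
    affineMatrix x i.castSucc (Fin.last n) = x.2 i := by
  simp [affineMatrix]

@[simp]
lemma affineMatrix_castSucc_castSucc (x : Matrix (Fin n) (Fin n) R × (Fin n → R))
    (i j : Fin n) : affineMatrix x i.castSucc j.castSucc = x.1 i j := by
  simp [affineMatrix]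

lemma affineMatrix_mul (x y : Matrix (Fin n) (Fin n) R × (Fin n → R)) :
    affineMatrix x * affineMatrix y = affineMatrix (x.1 * y.1, x.1 *ᵥ y.2) := by
  ext i j
  induction i using Fin.lastCases <;> induction j using Fin.lastCases <;>
    simp [mul_apply, Fin.sum_univ_castSucc, mulVec, dotProduct]

lemma affineMatrix_commutator (x y : Matrix (Fin n) (Fin n) R × (Fin n → R)) :
    affineMatrix x * affineMatrix y - affineMatrix y * affineMatrix x =
      affineMatrix (x.1 * y.1 - y.1 * x.1, x.1 *ᵥ y.2 - y.1 *ᵥ x.2) := by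
  rw [affineMatrix_mul, affineMatrix_mul, ← map_sub]
  rfl

lemma affineMatrix_submatrix_eq_self {M : Matrix (Fin (n + 1)) (Fin (n + 1)) R}
    (hM : ∀ j, M (Fin.last n) j = 0) :
    affineMatrix (M.submatrix Fin.castSucc Fin.castSucc, fun i => M i.castSucc (Fin.last n)) =
      M := by
  ext i j
  induction i using Fin.lastCases <;> induction j using Fin.lastCases <;> simp [hM]

def affineSkewAlg (J : Matrix (Fin n) (Fin n) R) :
    Submodule R (Matrix (Fin (n + 1)) (Fin (n + 1)) R) :=
  ((skewAdjointMatricesSubmodule J).prod ⊤).map affineMatrix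

lemma affineMatrix_mem_affineSkewAlg {J ω : Matrix (Fin n) (Fin n) R}
    (hω : ω ∈ skewAdjointMatricesSubmodule J) (v : Fin n → R) :
    affineMatrix (ω, v) ∈ affineSkewAlg J :=
  ⟨_, ⟨hω, trivial⟩, rfl⟩

lemma mem_affineSkewAlg_iff {J : Matrix (Fin n) (Fin n) R}
    {M : Matrix (Fin (n + 1)) (Fin (n + 1)) R} :
    M ∈ affineSkewAlg J ↔ (∀ j, M (Fin.last n) j = 0) ∧
      M.submatrix Fin.castSucc Fin.castSucc ∈ skewAdjointMatricesSubmodule J := by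
  constructor
  · rintro ⟨x, ⟨hx, -⟩, rfl⟩
    have hblock : (affineMatrix x).submatrix Fin.castSucc Fin.castSucc = x.1 := by ext; simp
    exact ⟨affineMatrix_last x, hblock ▸ hx⟩
  · rintro ⟨hlast, hskew⟩
    exact ⟨_, ⟨hskew, trivial⟩, affineMatrix_submatrix_eq_self hlast⟩

lemma commutator_mem_affineSkewAlg {J : Matrix (Fin n) (Fin n) R}
    {A B : Matrix (Fin (n + 1)) (Fin (n + 1)) R} (hA : A ∈ affineSkewAlg J)
    (hB : B ∈ affineSkewAlg J) : A * B - B * A ∈ affineSkewAlg J := by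
  obtain ⟨x, ⟨hx, -⟩, rfl⟩ := hA
  obtain ⟨y, ⟨hy, -⟩, rfl⟩ := hB
  rw [affineMatrix_commutator]
  exact affineMatrix_mem_affineSkewAlg (J.isSkewAdjoint_bracket hx hy) _

end Affine

section Signature

variable {K : Type*} [Field K] {n : ℕ}

def skewSingle (s : Fin n → K) (a b : Fin n) : Matrix (Fin n) (Fin n) K :=
  single a b (s a) - single b a (s b)

variable {s : Fin n → K}

lemma skewSingle_self (a : Fin n) : skewSingle s a a = 0 :=
  sub_self _

lemma skewSingle_mem_skewAdjointMatricesSubmodule (hs : ∀ i, s i * s i = 1) (a b : Fin n) :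
    skewSingle s a b ∈ skewAdjointMatricesSubmodule (diagonal s) := by
  rw [mem_skewAdjointMatricesSubmodule, Matrix.IsSkewAdjoint, Matrix.IsAdjointPair]
  ext i j
  simp only [skewSingle, mul_diagonal, diagonal_mul, transpose_apply, neg_apply, sub_apply,
    single_apply]
  split_ifs <;> grind

lemma skewSingle_commutator {a b c : Fin n} (hab : a ≠ b) (hca : c ≠ a) (hcb : c ≠ b) :
    skewSingle s a c * skewSingle s c b - skewSingle s c b * skewSingle s a c =
      s c • skewSingle s a b := by
  simp [skewSingle, sub_mul, mul_sub, hab, hca, hcb, hab.symm, hca.symm, hcb.symm, smul_sub,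
    mul_comm]

lemma skewSingle_mulVec_single {a b : Fin n} (hab : a ≠ b) :
    skewSingle s a b *ᵥ Pi.single b 1 = s a • Pi.single a 1 := by
  ext i
  simp [skewSingle, hab, Pi.single_apply, single_apply, eq_comm]

lemma skewAdjointMatricesSubmodule_diagonal_le_span [NeZero (2 : K)] (hs : ∀ i, s i * s i = 1) :
    skewAdjointMatricesSubmodule (diagonal s) ≤
      Submodule.span K (Set.range fun p : Fin n × Fin n => skewSingle s p.1 p.2) := by
  intro ω hω
  rw [mem_skewAdjointMatricesSubmodule, Matrix.IsSkewAdjoint, Matrix.IsAdjointPair] at hω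
  have hdecomp : ω = ∑ p : Fin n × Fin n, (s p.1 * ω p.1 p.2 / 2) • skewSingle s p.1 p.2 := by
    ext i j
    have hij := congr_fun₂ hω i j
    simp only [mul_diagonal, transpose_apply, diagonal_mul, neg_apply, mul_neg, skewSingle,
      sum_apply, smul_apply, sub_apply, single_apply, ite_and, smul_eq_mul, mul_sub, mul_ite,
      mul_zero, sum_sub_distrib, Fintype.sum_prod_type, sum_ite_irrel, sum_ite_eq', mem_univ,
      ↓reduceIte, sum_const_zero] at hij ⊢
    have h2 : (2 : K) * 2⁻¹ = 1 := mul_inv_cancel₀ two_ne_zero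
    linear_combination (s i / 2) * hij - ω i j * hs i - s i ^ 2 * ω i j * h2
  rw [hdecomp]
  exact Submodule.sum_mem _ fun p _ => Submodule.smul_mem _ _ (Submodule.subset_span ⟨p, rfl⟩)

lemma affineMatrix_skewSingle_mem_commutatorSpan (hn : 2 < n) (hs : ∀ i, s i * s i = 1)
    (a b : Fin n) :
    affineMatrix (skewSingle s a b, 0) ∈
      commutatorSpan K (affineSkewAlg (diagonal s) : Set _) := by
  rcases eq_or_ne a b with rfl | hab
  · simp [skewSingle_self, Prod.mk_zero_zero]
  obtain ⟨c, hca, hcb⟩ := Fin.exists_ne_and_ne_of_two_lt a b hn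
  have hcomm := commutator_mem_commutatorSpan (K := K)
    (affineMatrix_mem_affineSkewAlg (skewSingle_mem_skewAdjointMatricesSubmodule hs a c) 0)
    (affineMatrix_mem_affineSkewAlg (skewSingle_mem_skewAdjointMatricesSubmodule hs c b) 0)
  rw [affineMatrix_commutator, skewSingle_commutator hab hca hcb] at hcomm
  convert Submodule.smul_mem _ (s c) hcomm using 1
  rw [← map_smul]
  simp [smul_smul, hs]

lemma affineMatrix_single_mem_commutatorSpan (hn : 1 < n) (hs : ∀ i, s i * s i = 1)
    (a : Fin n) :
    affineMatrix (0, Pi.single a (1 : K)) ∈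
      commutatorSpan K (affineSkewAlg (diagonal s) : Set _) := by
  have : Nontrivial (Fin n) := Fin.nontrivial_iff_two_le.mpr hn
  obtain ⟨b, hba⟩ := exists_ne a
  have hcomm := commutator_mem_commutatorSpan (K := K)
    (affineMatrix_mem_affineSkewAlg (skewSingle_mem_skewAdjointMatricesSubmodule hs a b) 0)
    (affineMatrix_mem_affineSkewAlg (Submodule.zero_mem _) (Pi.single b 1))
  rw [affineMatrix_commutator, skewSingle_mulVec_single hba.symm] at hcomm
  convert Submodule.smul_mem _ (s a) hcomm using 1
  rw [← map_smul]
  simp [smul_smul, hs]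

theorem affineSkewAlg_le_commutatorSpan [NeZero (2 : K)] (hn : 2 < n)
    (hs : ∀ i, s i * s i = 1) :
    affineSkewAlg (diagonal s) ≤ commutatorSpan K (affineSkewAlg (diagonal s) : Set _) := by
  have hgen : (skewAdjointMatricesSubmodule (diagonal s)).prod ⊤ ≤
      Submodule.span K
        (LinearMap.inl K _ _ '' Set.range (fun p : Fin n × Fin n => skewSingle s p.1 p.2) ∪
          LinearMap.inr K _ _ '' Set.range (Pi.basisFun K (Fin n))) := by
    rw [LinearMap.span_inl_union_inr, (Pi.basisFun K (Fin n)).span_eq]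
    exact Submodule.prod_mono (skewAdjointMatricesSubmodule_diagonal_le_span hs) le_rfl
  refine (Submodule.map_mono hgen).trans ((Submodule.map_span_le _ _ _).mpr ?_)
  rintro _ (⟨_, ⟨⟨a, b⟩, rfl⟩, rfl⟩ | ⟨_, ⟨a, rfl⟩, rfl⟩)
  · exact affineMatrix_skewSingle_mem_commutatorSpan hn hs a b
  · simpa using affineMatrix_single_mem_commutatorSpan (by omega) hs a

end Signature

end Matrix

lemma poincAlg_eq_affineSkewAlg :
    poincAlg = (affineSkewAlg eta4m : Set (Matrix (Fin 5) (Fin 5) ℝ)) := by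
  ext M
  rw [SetLike.mem_coe, mem_affineSkewAlg_iff, mem_skewAdjointMatricesSubmodule,
    isSkewAdjoint_iff_add_eq_zero]
  rfl

theorem statement16 :
    (∀ A ∈ poincAlg, ∀ B ∈ poincAlg, A * B - B * A ∈ poincAlg) ∧
    (∀ M ∈ poincAlg, M ∈ Submodule.span ℝ
      {C : Matrix (Fin 5) (Fin 5) ℝ | ∃ A ∈ poincAlg, ∃ B ∈ poincAlg, C = A * B - B * A}) := by
  have hsigns : ∀ i, (![-1, 1, 1, 1] : Fin 4 → ℝ) i * ![-1, 1, 1, 1] i = 1 := by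
    intro i
    fin_cases i <;> norm_num
  rw [poincAlg_eq_affineSkewAlg]
  exact ⟨fun A hA B hB => commutator_mem_affineSkewAlg hA hB,
    fun M hM => affineSkewAlg_le_commutatorSpan (by norm_num) hsigns hM⟩
end
end
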